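/- Let P be a nonempty polyhedral set in ℝ^d, G ⊆ H nonempty faces of P, x_1 ∈ relint G, and let F be a face with G ⊆ F ⊆ H. Define F* = pos((F - x_1) ∩ L(G)^⊥) and H* = pos((H - x_1) ∩ L(G)^⊥), where L(G) is the direction space of G. Then F* is a face of the polyhedral cone H*, every face of H* arises in this way from some face F with G ⊆ F ⊆ H, and dim F* = dim F - dim G. -/

import Mathlib

open RealInnerProductSpace Pointwise

noncomputable section

abbrev Euc (d : ℕ) := EuclideanSpace ℝ (Fin d)

/-- A polyhedral set: intersection of finitely many closed half-spaces. -/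
def IsPolyhedral {d : ℕ} (P : Set (Euc d)) : Prop :=
  ∃ s : Finset (Euc d × ℝ), P = {x | ∀ h ∈ s, ⟪h.1, x⟫ ≤ h.2}

/-- A (nonempty) face of a convex set: a nonempty convex extreme subset. -/
def IsFaceOf {d : ℕ} (P F : Set (Euc d)) : Prop :=
  F.Nonempty ∧ Convex ℝ F ∧ IsExtreme ℝ P F

/-- The normal cone of `P` at the face `F`. -/
def normalCone {d : ℕ} (P F : Set (Euc d)) : Set (Euc d) :=
  {u | ∀ f ∈ F, ∀ z ∈ P, ⟪u, z - f⟫ ≤ 0}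

/-- The dimension of a set: the rank of the direction of its affine hull. -/
def sdim {d : ℕ} (F : Set (Euc d)) : ℕ :=
  Module.finrank ℝ (affineSpan ℝ F).direction

/-- φ_P(x) = Σ_{F face of P} (-1)^{dim F} 1_{F - N(P,F)}(x). -/
def phi {d : ℕ} (P : Set (Euc d)) (x : Euc d) : ℤ :=
  ∑ᶠ F ∈ {F : Set (Euc d) | IsFaceOf P F},
    (-1 : ℤ) ^ sdim F * (F - normalCone P F).indicator (fun _ => (1 : ℤ)) x

/-- A set is line-free if it contains no affine line. -/
def LineFree {d : ℕ} (P : Set (Euc d)) : Prop :=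
  ∀ x y : Euc d, y ≠ 0 → ∃ t : ℝ, x + t • y ∉ P

/-- The positive hull (cone) generated by a set containing `0`:
`coneOf A = ⋃_{t>0} t • A`. -/
def coneOf {d : ℕ} (A : Set (Euc d)) : Set (Euc d) :=
  {y | ∃ t : ℝ, 0 < t ∧ ∃ a ∈ A, y = t • a}


/-!
Translating by `x₁`, intersecting with `K = L(G)ᗮ` and taking positive hulls preserve
extremality, so `F*` is a face of `H*`. As `x₁` lies in the relative interior of `G ⊆ F`, the
component orthogonal to `L(G)` of any `y ∈ F - x₁` is a positive multiple of a point of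
`(F - x₁) ∩ K`, so `L(F) = L(G) ⊕ span F*`.

Conversely, for `P = {x | ⟪a, x⟫ ≤ b for (a, b) ∈ s}`, the points of `P` satisfying with
equality the inequalities tight at `z` form the smallest face of `P` containing `z`. For a face
`S` of `H*`, take `y` in its relative interior and `z = x₁ + ε y` with `ε > 0` so small that the
inequalities tight at `z` are tight at `x₁`. The face `F'` of `z` then lies between `G` and `H`,
and `F'* = S`: an inequality tight at `z` vanishes at `y`, hence on all of `S`; and for
`x₁ + b ∈ F'`, a positive multiple of `y` splits in `H*` as `(w - x₁) + δ b` with `w ∈ F'` beyond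
`z`, so `b ∈ S`.
-/

open Filter Topology

theorem mem_sub_singleton_iff {E : Type*} [AddCommGroup E] {A : Set E} {x y : E} :
    y ∈ A - {x} ↔ x + y ∈ A := by
  rw [Set.sub_singleton]
  exact ⟨fun ⟨a, ha, hay⟩ => by rwa [← hay, add_sub_cancel],
    fun h => ⟨x + y, h, add_sub_cancel_left x y⟩⟩

theorem direction_affineSpan_eq_span_sub_singleton {E : Type*} [AddCommGroup E] [Module ℝ E]
    {A : Set E} {x : E} (hx : x ∈ A) :
    (affineSpan ℝ A).direction = Submodule.span ℝ (A - {x}) := by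
  rw [direction_affineSpan, vectorSpan_eq_span_vsub_set_right ℝ hx, Set.sub_singleton]
  rfl

section Relint

variable {E : Type*} [NormedAddCommGroup E] [NormedSpace ℝ E]

theorem eventually_add_smul_mem_of_mem_intrinsicInterior {A : Set E} {x l : E}
    (hx : x ∈ intrinsicInterior ℝ A) (hl : l ∈ (affineSpan ℝ A).direction) :
    ∀ᶠ δ in 𝓝 (0 : ℝ), x + δ • l ∈ A := by
  obtain ⟨x', hx', rfl⟩ := hx
  let c : ℝ → affineSpan ℝ A := fun δ =>
    ⟨δ • l +ᵥ (x' : E), AffineSubspace.vadd_mem_of_mem_direction (Submodule.smul_mem _ δ hl) x'.2⟩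
  have hc : Continuous c := by fun_prop
  have hc0 : c 0 = x' := by ext; simp [c]
  filter_upwards [hc.continuousAt.preimage_mem_nhds (hc0 ▸ isOpen_interior.mem_nhds hx')] with δ hδ
  simpa [c, add_comm] using interior_subset hδ

theorem exists_pos_add_smul_add_mem {F G : Set E} {x y l : E} (hF : Convex ℝ F) (hGF : G ⊆ F)
    (hx : x ∈ intrinsicInterior ℝ G) (hy : x + y ∈ F) (hl : l ∈ (affineSpan ℝ G).direction) :
    ∃ c > (0 : ℝ), x + c • (y + l) ∈ F := by
  obtain ⟨δ, hδ, hxl⟩ := (eventually_add_smul_mem_of_mem_intrinsicInterior hx hl).exists_gt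
  refine ⟨δ / (1 + δ), by positivity, ?_⟩
  have hmem := hF.add_smul_mem (hGF hxl) (y := y - δ • l) (by simpa using hy)
    (t := δ / (1 + δ)) ⟨by positivity, by rw [div_le_one (by positivity)]; linarith⟩
  have hcoef : δ - δ / (1 + δ) * δ = δ / (1 + δ) := by field_simp; ring
  convert hmem using 1
  linear_combination (norm := module) -(hcoef • l)

end Relint

section Inner

variable {E : Type*} [NormedAddCommGroup E] [InnerProductSpace ℝ E]

theorem inner_eq_of_mem_intrinsicInterior {A : Set E} {v x : E} {c : ℝ}
    (hle : ∀ a ∈ A, ⟪v, a⟫ ≤ c) (hx : x ∈ intrinsicInterior ℝ A) (hxc : ⟪v, x⟫ = c) :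
    ∀ a ∈ A, ⟪v, a⟫ = c := by
  intro a ha
  have hdir : x - a ∈ (affineSpan ℝ A).direction :=
    AffineSubspace.vsub_mem_direction (subset_affineSpan ℝ A (intrinsicInterior_subset hx))
      (subset_affineSpan ℝ A ha)
  obtain ⟨δ, hδ, hmem⟩ := (eventually_add_smul_mem_of_mem_intrinsicInterior hx hdir).exists_gt
  have hpush := hle _ hmem
  rw [inner_add_right, inner_smul_right, inner_sub_right, hxc] at hpush
  refine le_antisymm (hle a ha) ?_
  nlinarith

theorem inner_eq_of_mem_openSegment {v a b z : E} {c : ℝ} (ha : ⟪v, a⟫ ≤ c) (hb : ⟪v, b⟫ ≤ c)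
    (hz : z ∈ openSegment ℝ a b) (hzc : ⟪v, z⟫ = c) : ⟪v, a⟫ = c := by
  obtain ⟨p, q, hp, hq, hpq, rfl⟩ := hz
  obtain rfl : q = 1 - p := by linarith
  rw [inner_add_right, inner_smul_right, inner_smul_right] at hzc
  by_contra hne
  have := mul_lt_mul_of_pos_left (lt_of_le_of_ne ha hne) hp
  linarith [mul_le_mul_of_nonneg_left hb hq.le]

theorem eventually_inner_add_smul_lt {v z : E} {c : ℝ} (hz : ⟪v, z⟫ < c) (y : E) :
    ∀ᶠ δ in 𝓝 (0 : ℝ), ⟪v, z + δ • y⟫ < c := by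
  have hcont : Continuous fun δ : ℝ => ⟪v, z + δ • y⟫ := by fun_prop
  exact (hcont.tendsto' 0 _ (by simp)).eventually_lt_const hz

end Inner

section Extreme

variable {E : Type*} [AddCommGroup E] [Module ℝ E] {C S : Set E}

theorem IsExtreme.smul_mem (hS : IsExtreme ℝ C S) (hC : ∀ y ∈ C, ∀ c : ℝ, 0 < c → c • y ∈ C)
    {s : E} (hs : s ∈ S) {c : ℝ} (hc : 0 < c) : c • s ∈ S := by
  have hsC := hS.subset hs
  refine hS.left_mem_of_mem_openSegment (hC s hsC c hc) (hC s hsC c⁻¹ (inv_pos.2 hc)) hs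
    ⟨1 / (1 + c), c / (1 + c), by positivity, by positivity, by field_simp, ?_⟩
  rw [smul_smul, smul_smul, ← add_smul]
  convert one_smul ℝ s
  field_simp
  ring

theorem IsExtreme.mem_of_add_mem (hS : IsExtreme ℝ C S)
    (hC : ∀ y ∈ C, ∀ c : ℝ, 0 < c → c • y ∈ C) {p q : E} (hp : p ∈ C) (hq : q ∈ C)
    (hpq : p + q ∈ S) : p ∈ S ∧ q ∈ S := by
  have hseg : p + q ∈ openSegment ℝ ((2 : ℝ) • p) ((2 : ℝ) • q) :=
    ⟨1 / 2, 1 / 2, by norm_num, by norm_num, by norm_num, by simp [smul_smul]⟩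
  have h2p := hS.left_mem_of_mem_openSegment (hC p hp 2 two_pos) (hC q hq 2 two_pos) hpq hseg
  have h2q := hS.right_mem_of_mem_openSegment (hC p hp 2 two_pos) (hC q hq 2 two_pos) hpq hseg
  constructor
  · simpa [smul_smul] using hS.smul_mem hC h2p (one_half_pos (α := ℝ))
  · simpa [smul_smul] using hS.smul_mem hC h2q (one_half_pos (α := ℝ))

theorem IsExtreme.sub_singleton_inter {A B : Set E} (h : IsExtreme ℝ A B) (x : E) (K : Set E) :
    IsExtreme ℝ ((A - {x}) ∩ K) ((B - {x}) ∩ K) := by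
  refine ⟨Set.inter_subset_inter_left _ (Set.sub_subset_sub_right h.subset), ?_⟩
  rintro a ⟨ha, haK⟩ b ⟨hb, hbK⟩ z ⟨hz, -⟩ hseg
  rw [mem_sub_singleton_iff] at ha hb hz
  exact ⟨mem_sub_singleton_iff.2 (h.left_mem_of_mem_openSegment ha hb hz
    ((mem_openSegment_translate ℝ x).2 hseg)), haK⟩

end Extreme

section Cone

variable {d : ℕ}

theorem subset_coneOf (A : Set (Euc d)) : A ⊆ coneOf A :=
  fun a ha => ⟨1, one_pos, a, ha, (one_smul ℝ a).symm⟩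

theorem coneOf_mono {A B : Set (Euc d)} (h : A ⊆ B) : coneOf A ⊆ coneOf B := by
  rintro _ ⟨t, ht, a, ha, rfl⟩
  exact ⟨t, ht, a, h ha, rfl⟩

theorem smul_mem_coneOf {A : Set (Euc d)} {y : Euc d} (hy : y ∈ coneOf A) {c : ℝ} (hc : 0 < c) :
    c • y ∈ coneOf A := by
  obtain ⟨t, ht, a, ha, rfl⟩ := hy
  exact ⟨c * t, mul_pos hc ht, a, ha, smul_smul c t a⟩

theorem convex_coneOf {A : Set (Euc d)} (hA : Convex ℝ A) : Convex ℝ (coneOf A) := by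
  rintro _ ⟨t, ht, a, ha, rfl⟩ _ ⟨s, hs, b, hb, rfl⟩ p q hp hq hpq
  have hr : 0 < p * t + q * s := by
    rcases hp.eq_or_lt with rfl | hp'
    · rw [zero_add] at hpq
      simpa [hpq] using hs
    · exact add_pos_of_pos_of_nonneg (mul_pos hp' ht) (mul_nonneg hq hs.le)
  refine ⟨p * t + q * s, hr, (p * t / (p * t + q * s)) • a + (q * s / (p * t + q * s)) • b,
    hA ha hb (by positivity) (by positivity) (by field_simp), ?_⟩
  rw [smul_add, smul_smul, smul_smul, smul_smul, smul_smul, mul_div_cancel₀ _ hr.ne',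
    mul_div_cancel₀ _ hr.ne']

theorem span_coneOf (A : Set (Euc d)) : Submodule.span ℝ (coneOf A) = Submodule.span ℝ A := by
  refine le_antisymm (Submodule.span_le.2 ?_) (Submodule.span_mono (subset_coneOf A))
  rintro _ ⟨t, -, a, ha, rfl⟩
  exact Submodule.smul_mem _ t (Submodule.subset_span ha)

theorem sdim_coneOf {A : Set (Euc d)} (h0 : (0 : Euc d) ∈ A) :
    sdim (coneOf A) = Module.finrank ℝ (Submodule.span ℝ A) := by
  have hsub : coneOf A - {0} = coneOf A := by
    ext y
    rw [mem_sub_singleton_iff, zero_add]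
  rw [sdim, direction_affineSpan_eq_span_sub_singleton (subset_coneOf A h0), hsub, span_coneOf]

theorem isExtreme_coneOf {A B : Set (Euc d)} (hA : Convex ℝ A) (hB : Convex ℝ B)
    (h0 : (0 : Euc d) ∈ B) (hAB : IsExtreme ℝ A B) : IsExtreme ℝ (coneOf A) (coneOf B) := by
  have shrink : ∀ {X : Set (Euc d)}, Convex ℝ X → (0 : Euc d) ∈ X → ∀ {μ t : ℝ} {a : Euc d},
      a ∈ X → 0 ≤ μ → 0 ≤ t → μ * t ≤ 1 → μ • t • a ∈ X := fun hX hX0 _ _ _ ha hμ ht hμt => by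
    rw [smul_smul]
    exact hX.smul_mem_of_zero_mem hX0 ha ⟨mul_nonneg hμ ht, hμt⟩
  refine ⟨coneOf_mono hAB.subset, ?_⟩
  rintro _ ⟨s, hs, a, ha, rfl⟩ _ ⟨t, ht, b, hb, rfl⟩ _ ⟨r, hr, c, hc, rfl⟩ ⟨p, q, hp, hq, hpq, hseg⟩
  -- rescale all three points by a common factor so that they lie in `A` itself
  set μ := (s + t + r)⁻¹
  have hμ : 0 < μ := inv_pos.2 (by positivity)
  have hμs : μ * s ≤ 1 := by rw [inv_mul_le_iff₀ (by positivity)]; linarith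
  have hμt : μ * t ≤ 1 := by rw [inv_mul_le_iff₀ (by positivity)]; linarith
  have hμr : μ * r ≤ 1 := by rw [inv_mul_le_iff₀ (by positivity)]; linarith
  have hμA := hAB.left_mem_of_mem_openSegment (shrink hA (hAB.subset h0) ha hμ.le hs.le hμs)
    (shrink hA (hAB.subset h0) hb hμ.le ht.le hμt) (shrink hB h0 hc hμ.le hr.le hμr)
    ⟨p, q, hp, hq, hpq, by rw [← hseg, smul_add, smul_comm μ p, smul_comm μ q]⟩
  exact ⟨μ⁻¹, inv_pos.2 hμ, _, hμA, by rw [smul_smul, inv_mul_cancel₀ hμ.ne', one_smul]⟩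

end Cone

section Polyhedron

variable {d : ℕ}

def polyhedron (s : Finset (Euc d × ℝ)) : Set (Euc d) :=
  {x | ∀ h ∈ s, ⟪h.1, x⟫ ≤ h.2}

def tightFace (s : Finset (Euc d × ℝ)) (z : Euc d) : Set (Euc d) :=
  {x ∈ polyhedron s | ∀ h ∈ s, ⟪h.1, z⟫ = h.2 → ⟪h.1, x⟫ = h.2}

theorem convex_polyhedron (s : Finset (Euc d × ℝ)) : Convex ℝ (polyhedron s) := by
  have : polyhedron s = ⋂ h ∈ s, {x | ⟪h.1, x⟫ ≤ h.2} := by ext; simp [polyhedron]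
  rw [this]
  exact convex_iInter₂ fun h _ => convex_halfSpace_le (innerₛₗ ℝ h.1).isLinear h.2

variable {s : Finset (Euc d × ℝ)}

theorem convex_tightFace (z : Euc d) : Convex ℝ (tightFace s z) := by
  rintro x ⟨hxP, hx⟩ y ⟨hyP, hy⟩ a b ha hb hab
  refine ⟨convex_polyhedron s hxP hyP ha hb hab, fun h hm hz => ?_⟩
  rw [inner_add_right, inner_smul_right, inner_smul_right, hx h hm hz, hy h hm hz, ← add_mul,
    hab, one_mul]

theorem isExtreme_tightFace (z : Euc d) : IsExtreme ℝ (polyhedron s) (tightFace s z) :=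
  ⟨fun _ hx => hx.1, fun _ ha _ hb _ hw hseg => ⟨ha, fun h hm hz =>
    inner_eq_of_mem_openSegment (ha h hm) (hb h hm) hseg (hw.2 h hm hz)⟩⟩

theorem isFaceOf_tightFace {z : Euc d} (hz : z ∈ polyhedron s) :
    IsFaceOf (polyhedron s) (tightFace s z) :=
  ⟨⟨z, hz, fun _ _ h => h⟩, convex_tightFace z, isExtreme_tightFace z⟩

theorem subset_tightFace {G : Set (Euc d)} {x : Euc d} (hG : G ⊆ polyhedron s)
    (hx : x ∈ intrinsicInterior ℝ G) : G ⊆ tightFace s x :=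
  fun g hg => ⟨hG hg, fun h hm hxh =>
    inner_eq_of_mem_intrinsicInterior (fun _ ha => hG ha h hm) hx hxh g hg⟩

theorem eventually_tightFace_subset_tightFace_add_smul {z : Euc d} (hz : z ∈ polyhedron s)
    (y : Euc d) : ∀ᶠ δ in 𝓝 (0 : ℝ), tightFace s z ⊆ tightFace s (z + δ • y) := by
  have htight : ∀ h ∈ s, ∀ᶠ δ in 𝓝 (0 : ℝ), ⟪h.1, z + δ • y⟫ = h.2 → ⟪h.1, z⟫ = h.2 := by
    intro h hm
    rcases (hz h hm).eq_or_lt with hzh | hzh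
    · exact Eventually.of_forall fun _ _ => hzh
    · filter_upwards [eventually_inner_add_smul_lt hzh y] with δ hδ hδh
      exact absurd hδh hδ.ne
  filter_upwards [(eventually_all_finset s).2 htight] with δ hδ w hw
  exact ⟨hw.1, fun h hm hzh => hw.2 h hm (hδ h hm hzh)⟩

theorem eventually_add_smul_sub_mem_tightFace {z w : Euc d} (hz : z ∈ polyhedron s)
    (hw : w ∈ tightFace s z) : ∀ᶠ δ in 𝓝 (0 : ℝ), z + δ • (z - w) ∈ tightFace s z := by
  have hconstraint : ∀ h ∈ s, ∀ᶠ δ in 𝓝 (0 : ℝ), ⟪h.1, z + δ • (z - w)⟫ ≤ h.2 ∧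
      (⟪h.1, z⟫ = h.2 → ⟪h.1, z + δ • (z - w)⟫ = h.2) := by
    intro h hm
    rcases (hz h hm).eq_or_lt with hzh | hzh
    · have hδ : ∀ δ : ℝ, ⟪h.1, z + δ • (z - w)⟫ = h.2 := fun δ => by
        rw [inner_add_right, inner_smul_right, inner_sub_right, hzh, hw.2 h hm hzh, sub_self,
          mul_zero, add_zero]
      exact Eventually.of_forall fun δ => ⟨(hδ δ).le, fun _ => hδ δ⟩
    · filter_upwards [eventually_inner_add_smul_lt hzh (z - w)] with δ hδ
      exact ⟨hδ.le, fun h' => absurd h' hzh.ne⟩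
  filter_upwards [(eventually_all_finset s).2 hconstraint] with δ hδ
  exact ⟨fun h hm => (hδ h hm).1, fun h hm hzh => (hδ h hm).2 hzh⟩

theorem tightFace_subset {H : Set (Euc d)} {z : Euc d} (hH : IsExtreme ℝ (polyhedron s) H)
    (hz : z ∈ H) : tightFace s z ⊆ H := by
  intro w hw
  obtain ⟨δ, hδ, hp⟩ := (eventually_add_smul_sub_mem_tightFace (hH.subset hz) hw).exists_gt
  have hcoef : 1 / (1 + δ) + 1 / (1 + δ) * δ = 1 := by field_simp
  refine hH.left_mem_of_mem_openSegment hw.1 hp.1 hz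
    ⟨δ / (1 + δ), 1 / (1 + δ), by positivity, by positivity, by field_simp; ring, ?_⟩
  linear_combination (norm := module) hcoef • z

end Polyhedron

section LocalizedCone

variable {d : ℕ}

theorem isFaceOf_coneOf_sub_singleton_inter {H F : Set (Euc d)} {x : Euc d}
    (K : Submodule ℝ (Euc d)) (hH : Convex ℝ H) (hF : Convex ℝ F) (hHF : IsExtreme ℝ H F)
    (hx : x ∈ F) : IsFaceOf (coneOf ((H - {x}) ∩ K)) (coneOf ((F - {x}) ∩ K)) := by
  have convex_sub_inter : ∀ {X : Set (Euc d)}, Convex ℝ X → Convex ℝ ((X - {x}) ∩ K) :=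
    fun hX => (hX.sub (convex_singleton x)).inter K.convex
  have h0 : (0 : Euc d) ∈ (F - {x}) ∩ K :=
    ⟨mem_sub_singleton_iff.2 (by simpa using hx), K.zero_mem⟩
  exact ⟨⟨0, subset_coneOf _ h0⟩, convex_coneOf (convex_sub_inter hF),
    isExtreme_coneOf (convex_sub_inter hH) (convex_sub_inter hF) h0 (hHF.sub_singleton_inter x K)⟩

theorem direction_affineSpan_eq_sup {F G : Set (Euc d)} {x : Euc d} (hF : Convex ℝ F)
    (hGF : G ⊆ F) (hx : x ∈ intrinsicInterior ℝ G) :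
    (affineSpan ℝ F).direction = (affineSpan ℝ G).direction ⊔
      Submodule.span ℝ ((F - {x}) ∩ ((affineSpan ℝ G).directionᗮ : Set (Euc d))) := by
  set L := (affineSpan ℝ G).direction
  set V := Submodule.span ℝ ((F - {x}) ∩ (Lᗮ : Set (Euc d)))
  rw [direction_affineSpan_eq_span_sub_singleton (hGF (intrinsicInterior_subset hx))]
  refine le_antisymm (Submodule.span_le.2 fun y hy => ?_)
    (sup_le (fun l hl => ?_) (Submodule.span_mono Set.inter_subset_left))
  · obtain ⟨l, hl, m, hm, rfl⟩ := L.exists_add_mem_mem_orthogonal y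
    obtain ⟨c, hc, hcF⟩ :=
      exists_pos_add_smul_add_mem hF hGF hx (mem_sub_singleton_iff.1 hy) (L.neg_mem hl)
    have hcm : c • m ∈ V := Submodule.subset_span
      ⟨mem_sub_singleton_iff.2 (by simpa using hcF), Submodule.smul_mem _ c hm⟩
    exact Submodule.add_mem_sup hl ((Submodule.smul_mem_iff _ hc.ne').1 hcm)
  · obtain ⟨δ, hδ, hxl⟩ := (eventually_add_smul_mem_of_mem_intrinsicInterior hx hl).exists_gt
    exact (Submodule.smul_mem_iff _ hδ.ne').1
      (Submodule.subset_span (mem_sub_singleton_iff.2 (hGF hxl)))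

theorem sdim_coneOf_sub_singleton_inter_orthogonal {F G : Set (Euc d)} {x : Euc d}
    (hF : Convex ℝ F) (hGF : G ⊆ F) (hx : x ∈ intrinsicInterior ℝ G) :
    sdim (coneOf ((F - {x}) ∩ ((affineSpan ℝ G).directionᗮ : Set (Euc d)))) =
      sdim F - sdim G := by
  set L := (affineSpan ℝ G).direction
  set V := Submodule.span ℝ ((F - {x}) ∩ (Lᗮ : Set (Euc d)))
  have h0 : (0 : Euc d) ∈ (F - {x}) ∩ (Lᗮ : Set (Euc d)) :=
    ⟨mem_sub_singleton_iff.2 (by simpa using hGF (intrinsicInterior_subset hx)), Lᗮ.zero_mem⟩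
  have hLV : L ⊓ V = ⊥ := eq_bot_iff.2 <| (inf_le_inf_left L
    (Submodule.span_le.2 Set.inter_subset_right)).trans L.orthogonal_disjoint.eq_bot.le
  have hrank := Submodule.finrank_sup_add_finrank_inf_eq L V
  rw [hLV, finrank_bot, add_zero, ← direction_affineSpan_eq_sup hF hGF hx] at hrank
  rw [sdim_coneOf h0, sdim, sdim, hrank]
  exact (Nat.add_sub_cancel_left ..).symm

variable {s : Finset (Euc d × ℝ)}

theorem subset_coneOf_tightFace {H S : Set (Euc d)} {x y : Euc d} {ε : ℝ}
    (K : Submodule ℝ (Euc d)) (hH : H ⊆ polyhedron s) (hS : S ⊆ coneOf ((H - {x}) ∩ K))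
    (hy : y ∈ intrinsicInterior ℝ S) (hε : 0 < ε) (hx : x ∈ tightFace s (x + ε • y)) :
    S ⊆ coneOf ((tightFace s (x + ε • y) - {x}) ∩ K) := by
  intro u hu
  obtain ⟨r, hr, b, ⟨hb, hbK⟩, rfl⟩ := hS hu
  refine ⟨r, hr, b, ⟨mem_sub_singleton_iff.2 ⟨hH (mem_sub_singleton_iff.1 hb),
    fun h hm hzh => ?_⟩, hbK⟩, rfl⟩
  have hxh : ⟪h.1, x⟫ = h.2 := hx.2 h hm hzh
  have hle : ∀ u ∈ S, ⟪h.1, u⟫ ≤ 0 := by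
    intro u hu
    obtain ⟨t, ht, a, ⟨ha, -⟩, rfl⟩ := hS hu
    have hxa := hH (mem_sub_singleton_iff.1 ha) h hm
    rw [inner_add_right, hxh] at hxa
    rw [inner_smul_right]
    exact mul_nonpos_of_nonneg_of_nonpos ht.le (by linarith)
  have hy0 : ⟪h.1, y⟫ = 0 := by
    rw [inner_add_right, inner_smul_right, hxh] at hzh
    exact (mul_eq_zero.1 (by linarith)).resolve_left hε.ne'
  have hb0 := inner_eq_of_mem_intrinsicInterior hle hy hy0 _ hu
  rw [inner_smul_right] at hb0
  rw [inner_add_right, hxh, (mul_eq_zero.1 hb0).resolve_left hr.ne', add_zero]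

theorem coneOf_tightFace_subset {H S : Set (Euc d)} {x y : Euc d} {ε : ℝ}
    (K : Submodule ℝ (Euc d)) (hH : IsExtreme ℝ (polyhedron s) H)
    (hS : IsExtreme ℝ (coneOf ((H - {x}) ∩ K)) S) (hyS : y ∈ S) (hyK : y ∈ K) (hε : 0 < ε)
    (hzH : x + ε • y ∈ H) : coneOf ((tightFace s (x + ε • y) - {x}) ∩ K) ⊆ S := by
  have hC : ∀ u ∈ coneOf ((H - {x}) ∩ K), ∀ c : ℝ, 0 < c → c • u ∈ coneOf ((H - {x}) ∩ K) :=
    fun u hu c hc => smul_mem_coneOf hu hc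
  rintro _ ⟨r, hr, b, ⟨hb, hbK⟩, rfl⟩
  rw [mem_sub_singleton_iff] at hb
  obtain ⟨δ, hδ, hp⟩ := (eventually_add_smul_sub_mem_tightFace (hH.subset hzH) hb).exists_gt
  set p := x + ε • y + δ • (x + ε • y - (x + b))
  have hpx : p - x = ((1 + δ) * ε) • y - δ • b := by simp only [p]; module
  have hpC : p - x ∈ coneOf ((H - {x}) ∩ K) := subset_coneOf _
    ⟨mem_sub_singleton_iff.2 (by simpa using tightFace_subset hH hzH hp),
      hpx ▸ K.sub_mem (K.smul_mem _ hyK) (K.smul_mem _ hbK)⟩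
  have hbC : δ • b ∈ coneOf ((H - {x}) ∩ K) := smul_mem_coneOf
    (subset_coneOf ((H - {x}) ∩ K) ⟨mem_sub_singleton_iff.2 (tightFace_subset hH hzH hb), hbK⟩) hδ
  have hsum : (p - x) + δ • b ∈ S := by
    rw [hpx, sub_add_cancel]
    exact hS.smul_mem hC hyS (by positivity)
  have hδb := (hS.mem_of_add_mem hC hpC hbC hsum).2
  simpa [smul_smul, div_mul_cancel₀ r hδ.ne'] using hS.smul_mem hC hδb (div_pos hr hδ)

theorem exists_tightFace_eq_coneOf {H S : Set (Euc d)} {x : Euc d} (K : Submodule ℝ (Euc d))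
    (hH : IsFaceOf (polyhedron s) H) (hx : x ∈ H) (hS : IsFaceOf (coneOf ((H - {x}) ∩ K)) S) :
    ∃ z ∈ H, tightFace s x ⊆ tightFace s z ∧ S = coneOf ((tightFace s z - {x}) ∩ K) := by
  obtain ⟨y, hy⟩ := Set.Nonempty.intrinsicInterior hS.2.1 hS.1
  have hyS := intrinsicInterior_subset hy
  obtain ⟨t, ht, a, ⟨ha, haK⟩, rfl⟩ := hS.2.2.subset hyS
  have hsmall : ∀ᶠ ε in 𝓝 (0 : ℝ), ε * t < 1 :=
    ((continuous_id.mul continuous_const).tendsto' 0 0 (by simp)).eventually_lt_const one_pos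
  obtain ⟨ε, hε, hεt, hxz⟩ := (hsmall.and
    (eventually_tightFace_subset_tightFace_add_smul (hH.2.2.subset hx) (t • a))).exists_gt
  have hzH : x + ε • t • a ∈ H := by
    rw [smul_smul]
    exact hH.2.1.add_smul_mem hx (mem_sub_singleton_iff.1 ha) ⟨by positivity, hεt.le⟩
  refine ⟨_, hzH, hxz, subset_antisymm ?_ ?_⟩
  · exact subset_coneOf_tightFace K hH.2.2.subset hS.2.2.subset hy hε
      (hxz ⟨hH.2.2.subset hx, fun _ _ h => h⟩)
  · exact coneOf_tightFace_subset K hH.2.2 hS.2.2 hyS (K.smul_mem t haK) hε hzH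

end LocalizedCone

theorem faces_of_localized_cone_general {d : ℕ} (P G H F : Set (Euc d))
    (hP : IsPolyhedral P)
    (hG : IsFaceOf P G) (hH : IsFaceOf P H) (hGH : G ⊆ H)
    (x₁ : Euc d) (hx₁ : x₁ ∈ intrinsicInterior ℝ G)
    (hF : IsFaceOf P F) (hGF : G ⊆ F) (hFH : F ⊆ H) :
    (IsFaceOf
      (coneOf ((H - {x₁}) ∩ ((affineSpan ℝ G).directionᗮ : Set (Euc d))))
      (coneOf ((F - {x₁}) ∩ ((affineSpan ℝ G).directionᗮ : Set (Euc d))))) ∧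
    (∀ S : Set (Euc d),
      IsFaceOf (coneOf ((H - {x₁}) ∩ ((affineSpan ℝ G).directionᗮ : Set (Euc d)))) S →
      ∃ F' : Set (Euc d), IsFaceOf P F' ∧ G ⊆ F' ∧ F' ⊆ H ∧
        S = coneOf ((F' - {x₁}) ∩ ((affineSpan ℝ G).directionᗮ : Set (Euc d)))) ∧
    sdim (coneOf ((F - {x₁}) ∩ ((affineSpan ℝ G).directionᗮ : Set (Euc d)))) =
      sdim F - sdim G := by
  obtain ⟨s, rfl⟩ := hP
  have hx₁G := intrinsicInterior_subset hx₁
  refine ⟨isFaceOf_coneOf_sub_singleton_inter _ hH.2.1 hF.2.1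
      (hF.2.2.mono hH.2.2.subset hFH) (hGF hx₁G), fun S hS => ?_,
    sdim_coneOf_sub_singleton_inter_orthogonal hF.2.1 hGF hx₁⟩
  obtain ⟨z, hzH, hxz, rfl⟩ := exists_tightFace_eq_coneOf _ hH (hGH hx₁G) hS
  exact ⟨tightFace s z, isFaceOf_tightFace (hH.2.2.subset hzH),
    (subset_tightFace hG.2.2.subset hx₁).trans hxz, tightFace_subset hH.2.2 hzH, rfl⟩

theorem faces_of_localized_cone {d : ℕ} (P G H F : Set (Euc d))
    (hP : IsPolyhedral P) (hne : P.Nonempty)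
    (hG : IsFaceOf P G) (hH : IsFaceOf P H) (hGH : G ⊆ H)
    (x₁ : Euc d) (hx₁ : x₁ ∈ intrinsicInterior ℝ G)
    (hF : IsFaceOf P F) (hGF : G ⊆ F) (hFH : F ⊆ H) :
    (IsFaceOf
      (coneOf ((H - {x₁}) ∩ ((affineSpan ℝ G).directionᗮ : Set (Euc d))))
      (coneOf ((F - {x₁}) ∩ ((affineSpan ℝ G).directionᗮ : Set (Euc d))))) ∧
    (∀ S : Set (Euc d),
      IsFaceOf (coneOf ((H - {x₁}) ∩ ((affineSpan ℝ G).directionᗮ : Set (Euc d)))) S →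
      ∃ F' : Set (Euc d), IsFaceOf P F' ∧ G ⊆ F' ∧ F' ⊆ H ∧
        S = coneOf ((F' - {x₁}) ∩ ((affineSpan ℝ G).directionᗮ : Set (Euc d)))) ∧
    sdim (coneOf ((F - {x₁}) ∩ ((affineSpan ℝ G).directionᗮ : Set (Euc d)))) =
      sdim F - sdim G :=
  faces_of_localized_cone_general P G H F hP hG hH hGH x₁ hx₁ hF hGF hFH
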